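/- Let F, G ∈ L¹([0,T]; L²(ℝ)) and f, g ∈ L²(ℝ). Let u, v solve (D_t + D_x)u = F, u(0) = f and (D_t − D_x)v = G, v(0) = g (Duhamel solutions). Then ‖uv‖_{L²([0,T]×ℝ)} ≤ C (‖f‖_{L²} + ∫₀^T ‖F(t)‖_{L²} dt)(‖g‖_{L²} + ∫₀^T ‖G(t)‖_{L²} dt) with an absolute constant C; the same bound holds with u replaced by its complex conjugate. -/

import Mathlib

/-!
Along characteristics, `‖u(t,x)‖ ≤ M(x - t)` and `‖v(t,x)‖ ≤ N(x + t)` for `0 ≤ t ≤ T`, where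
`M = ‖f‖ + ∫₀ᵀ ‖F(s, · + s)‖ ds` and `N = ‖g‖ + ∫₀ᵀ ‖G(s, · - s)‖ ds`; so both `uv` and `ūv`
are dominated by `M(x - t) N(x + t)`. For two free waves the substitutions `x ↦ x + t`,
`t ↦ 2t` give `∫∫ φ(x - t)² ψ(x + t)² dx dt = ½ ‖φ‖₂² ‖ψ‖₂²`. Minkowski's integral inequality,
used once in each factor, extends this to the superpositions `M` and `N`, and translation
invariance turns `‖F(s, · + s)‖₂` into `‖F(s)‖₂`. The constant is `C = 1`.
-/

open MeasureTheory ENNReal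

section L2

variable {α β : Type*} [MeasurableSpace α] [MeasurableSpace β] {μ : Measure α}

theorem eLpNorm_two_eq_lintegral_sq {ε : Type*} [ENorm ε] (f : α → ε) :
    eLpNorm f 2 μ = (∫⁻ x, ‖f x‖ₑ ^ 2 ∂μ) ^ (1 / 2 : ℝ) := by
  simp [eLpNorm_eq_lintegral_rpow_enorm_toReal two_ne_zero ofNat_ne_top]

theorem sq_eLpNorm_two (f : α → ℝ≥0∞) : eLpNorm f 2 μ ^ 2 = ∫⁻ x, f x ^ 2 ∂μ := by
  rw [eLpNorm_two_eq_lintegral_sq, ← rpow_natCast, ← rpow_mul]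
  simp

theorem lintegral_mul_le_eLpNorm_two_mul {f g : α → ℝ≥0∞} (hf : AEMeasurable f μ)
    (hg : AEMeasurable g μ) : ∫⁻ x, f x * g x ∂μ ≤ eLpNorm f 2 μ * eLpNorm g 2 μ := by
  simpa [eLpNorm_two_eq_lintegral_sq] using
    ENNReal.lintegral_mul_le_Lp_mul_Lq μ .two_two hf hg

theorem measurable_eLpNorm_two [SFinite μ] {H : β → α → ℝ≥0∞}
    (hH : Measurable (Function.uncurry H)) : Measurable fun s => eLpNorm (H s) 2 μ := by
  simp_rw [eLpNorm_two_eq_lintegral_sq, enorm_eq_self]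
  exact ((hH.pow_const 2).lintegral_prod_right').pow_const _

/-- Minkowski's integral inequality for `p = 2`: the square of the left side is an integral over
`ν.prod ν`, bounded inside by Cauchy–Schwarz. -/
theorem eLpNorm_two_lintegral_le [SFinite μ] {ν : Measure β} [SFinite ν] {H : β → α → ℝ≥0∞}
    (hH : Measurable (Function.uncurry H)) :
    eLpNorm (fun x => ∫⁻ s, H s x ∂ν) 2 μ ≤ ∫⁻ s, eLpNorm (H s) 2 μ ∂ν := by
  have hHx : ∀ x, Measurable fun s => H s x := fun x =>
    hH.comp (measurable_id.prodMk measurable_const)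
  have hHs : ∀ s, Measurable (H s) := fun s => hH.comp measurable_prodMk_left
  have hN := measurable_eLpNorm_two (μ := μ) hH
  rw [← ENNReal.pow_le_pow_left_iff two_ne_zero, sq_eLpNorm_two]
  calc ∫⁻ x, (∫⁻ s, H s x ∂ν) ^ 2 ∂μ
      = ∫⁻ x, ∫⁻ p, H p.1 x * H p.2 x ∂ν.prod ν ∂μ := by
        simp_rw [sq, lintegral_prod_mul (hHx _).aemeasurable (hHx _).aemeasurable]
    _ = ∫⁻ p, ∫⁻ x, H p.1 x * H p.2 x ∂μ ∂ν.prod ν :=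
        lintegral_lintegral_swap ((hH.comp (measurable_snd.fst.prodMk measurable_fst)).mul
          (hH.comp (measurable_snd.snd.prodMk measurable_fst))).aemeasurable
    _ ≤ ∫⁻ p, eLpNorm (H p.1) 2 μ * eLpNorm (H p.2) 2 μ ∂ν.prod ν :=
        lintegral_mono fun p =>
          lintegral_mul_le_eLpNorm_two_mul (hHs _).aemeasurable (hHs _).aemeasurable
    _ = (∫⁻ s, eLpNorm (H s) 2 μ ∂ν) ^ 2 := by
        rw [lintegral_prod_mul hN.aemeasurable hN.aemeasurable, sq]

end L2

section Superposition

variable {Z β γ : Type*} [MeasurableSpace Z] [MeasurableSpace β] [MeasurableSpace γ]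
  {μ : Measure Z} [SFinite μ] {ρ : Measure β} [SFinite ρ] {ν : Measure γ} [SFinite ν]

theorem eLpNorm_two_add_lintegral_mul_le {π : Z → β} (hπ : Measurable π) {W : Z → ℝ≥0∞}
    (hW : Measurable W) {c : ℝ≥0∞}
    (hc : ∀ ψ : β → ℝ≥0∞, Measurable ψ → eLpNorm (fun z => ψ (π z) * W z) 2 μ ≤ eLpNorm ψ 2 ρ * c)
    {φ : β → ℝ≥0∞} (hφ : Measurable φ) {H : γ → β → ℝ≥0∞} (hH : Measurable (Function.uncurry H)) :
    eLpNorm (fun z => (φ (π z) + ∫⁻ s, H s (π z) ∂ν) * W z) 2 μ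
      ≤ (eLpNorm φ 2 ρ + ∫⁻ s, eLpNorm (H s) 2 ρ ∂ν) * c := by
  have hHs : ∀ s, Measurable (H s) := fun s => hH.comp measurable_prodMk_left
  have hHπW : Measurable (Function.uncurry fun s z => H s (π z) * W z) :=
    (hH.comp (measurable_fst.prodMk (hπ.comp measurable_snd))).mul (hW.comp measurable_snd)
  have hsplit : (fun z => (φ (π z) + ∫⁻ s, H s (π z) ∂ν) * W z)
      = (fun z => φ (π z) * W z) + fun z => ∫⁻ s, H s (π z) * W z ∂ν := by
    ext z
    have hHz : Measurable fun s => H s (π z) := hH.comp (measurable_id.prodMk measurable_const)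
    rw [Pi.add_apply, add_mul, lintegral_mul_const'' _ hHz.aemeasurable]
  calc eLpNorm (fun z => (φ (π z) + ∫⁻ s, H s (π z) ∂ν) * W z) 2 μ
      ≤ eLpNorm (fun z => φ (π z) * W z) 2 μ
          + eLpNorm (fun z => ∫⁻ s, H s (π z) * W z ∂ν) 2 μ := by
        rw [hsplit]
        exact eLpNorm_add_le ((hφ.comp hπ).mul hW).aestronglyMeasurable
          hHπW.lintegral_prod_left'.aestronglyMeasurable one_le_two
    _ ≤ eLpNorm φ 2 ρ * c + ∫⁻ s, eLpNorm (fun z => H s (π z) * W z) 2 μ ∂ν :=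
        add_le_add (hc φ hφ) (eLpNorm_two_lintegral_le hHπW)
    _ ≤ eLpNorm φ 2 ρ * c + ∫⁻ s, eLpNorm (H s) 2 ρ * c ∂ν := by
        gcongr with s
        exact hc _ (hHs s)
    _ = (eLpNorm φ 2 ρ + ∫⁻ s, eLpNorm (H s) 2 ρ ∂ν) * c := by
        rw [lintegral_mul_const'' _ (measurable_eLpNorm_two hH).aemeasurable, add_mul]

end Superposition

theorem lintegral_comp_sub_two_mul (φ : ℝ → ℝ≥0∞) (c : ℝ) :
    ∫⁻ t, φ (c - 2 * t) = 2⁻¹ * ∫⁻ y, φ y := by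
  calc ∫⁻ t, φ (c - 2 * t)
      = ∫⁻ y, φ (c - y) ∂(Measure.map (2 * ·) volume) :=
        (lintegral_map_equiv (fun y => φ (c - y)) (MeasurableEquiv.mulLeft₀ 2 two_ne_zero)).symm
    _ = 2⁻¹ * ∫⁻ y, φ y := by
        rw [Real.map_volume_mul_left two_ne_zero, lintegral_smul_measure,
          lintegral_sub_left_eq_self φ c, abs_of_pos (by norm_num),
          ENNReal.ofReal_inv_of_pos two_pos, ENNReal.ofReal_ofNat, smul_eq_mul]

theorem lintegral_lintegral_comp_sub_mul_comp_add {φ ψ : ℝ → ℝ≥0∞} (hφ : Measurable φ)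
    (hψ : Measurable ψ) :
    ∫⁻ t, ∫⁻ x, φ (x - t) * ψ (x + t) = 2⁻¹ * ((∫⁻ y, φ y) * ∫⁻ y, ψ y) := by
  calc ∫⁻ t, ∫⁻ x, φ (x - t) * ψ (x + t)
      = ∫⁻ t, ∫⁻ x, φ (x - 2 * t) * ψ x := by
        refine lintegral_congr fun t => ?_
        rw [← lintegral_add_right_eq_self (fun x => φ (x - 2 * t) * ψ x) t]
        congr 1 with x
        rw [show x + t - 2 * t = x - t by ring]
    _ = ∫⁻ x, ∫⁻ t, φ (x - 2 * t) * ψ x := lintegral_lintegral_swap (by fun_prop)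
    _ = ∫⁻ x, (2⁻¹ * ∫⁻ y, φ y) * ψ x := by
        refine lintegral_congr fun x => ?_
        rw [lintegral_mul_const _ (by fun_prop), lintegral_comp_sub_two_mul]
    _ = 2⁻¹ * ((∫⁻ y, φ y) * ∫⁻ y, ψ y) := by
        rw [lintegral_const_mul _ hψ, mul_assoc]

theorem eLpNorm_two_comp_sub_mul_comp_add_le {φ ψ : ℝ → ℝ≥0∞} (hφ : Measurable φ)
    (hψ : Measurable ψ) :
    eLpNorm (fun z : ℝ × ℝ => φ (z.2 - z.1) * ψ (z.2 + z.1)) 2 ≤ eLpNorm φ 2 * eLpNorm ψ 2 := by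
  rw [← ENNReal.pow_le_pow_left_iff two_ne_zero, mul_pow, sq_eLpNorm_two, sq_eLpNorm_two,
    sq_eLpNorm_two, Measure.volume_eq_prod, lintegral_prod _ (by fun_prop)]
  simp_rw [mul_pow]
  rw [lintegral_lintegral_comp_sub_mul_comp_add (hφ.pow_const 2) (hψ.pow_const 2)]
  exact mul_le_of_le_one_left' (by norm_num)

theorem eLpNorm_two_wave_mul_wave_le {γ γ' : Type*} [MeasurableSpace γ] [MeasurableSpace γ']
    {ν : Measure γ} [SFinite ν] {ν' : Measure γ'} [SFinite ν'] {φ ψ : ℝ → ℝ≥0∞}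
    (hφ : Measurable φ) (hψ : Measurable ψ) {H : γ → ℝ → ℝ≥0∞} {K : γ' → ℝ → ℝ≥0∞}
    (hH : Measurable (Function.uncurry H)) (hK : Measurable (Function.uncurry K)) :
    eLpNorm (fun z : ℝ × ℝ => (φ (z.2 - z.1) + ∫⁻ s, H s (z.2 - z.1) ∂ν)
        * (ψ (z.2 + z.1) + ∫⁻ r, K r (z.2 + z.1) ∂ν')) 2
      ≤ (eLpNorm φ 2 + ∫⁻ s, eLpNorm (H s) 2 ∂ν) * (eLpNorm ψ 2 + ∫⁻ r, eLpNorm (K r) 2 ∂ν') := by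
  have hminus : Measurable fun z : ℝ × ℝ => z.2 - z.1 := by fun_prop
  have hplus : Measurable fun z : ℝ × ℝ => z.2 + z.1 := by fun_prop
  have hN : Measurable fun y => ψ y + ∫⁻ r, K r y ∂ν' := hψ.add hK.lintegral_prod_left'
  refine eLpNorm_two_add_lintegral_mul_le hminus (hN.comp hplus) (fun χ hχ => ?_) hφ hH
  have hcomm : ∀ a b : ℝ × ℝ → ℝ≥0∞, (fun z => a z * b z) = fun z => b z * a z :=
    fun a b => funext fun z => mul_comm _ _
  have hfree : ∀ ω : ℝ → ℝ≥0∞, Measurable ω →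
      eLpNorm (fun z : ℝ × ℝ => ω (z.2 + z.1) * χ (z.2 - z.1)) 2 ≤ eLpNorm ω 2 * eLpNorm χ 2 := by
    intro ω hω
    rw [hcomm, mul_comm]
    exact eLpNorm_two_comp_sub_mul_comp_add_le hχ hω
  rw [hcomm, mul_comm]
  exact eLpNorm_two_add_lintegral_mul_le hplus (hχ.comp hminus) hfree hψ hK

theorem enorm_add_I_mul_intervalIntegral_le {T t : ℝ} (ht : t ∈ Set.Icc 0 T) (a : ℂ) (h : ℝ → ℂ) :
    ‖a + Complex.I * ∫ s in 0..t, h s‖ₑ ≤ ‖a‖ₑ + ∫⁻ s in Set.Icc 0 T, ‖h s‖ₑ := by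
  refine (enorm_add_le _ _).trans (add_le_add le_rfl ?_)
  rw [enorm_mul, enorm_eq_nnnorm Complex.I, Complex.nnnorm_I, ENNReal.coe_one, one_mul,
    intervalIntegral.integral_of_le ht.1]
  exact (enorm_integral_le_lintegral_enorm _).trans
    (lintegral_mono_set (Set.Ioc_subset_Icc_self.trans (Set.Icc_subset_Icc_right ht.2)))

theorem bilinear_estimate_of_duhamel_bounds {T : ℝ} {f g : ℝ → ℂ} {F G : ℝ → ℝ → ℂ}
    (hf : Measurable f) (hg : Measurable g) (hF : Measurable (Function.uncurry F))
    (hG : Measurable (Function.uncurry G)) {U V : ℝ → ℝ → ℝ≥0∞}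
    (hU : ∀ t ∈ Set.Icc 0 T, ∀ x,
      U t x ≤ ‖f (x - t)‖ₑ + ∫⁻ s in Set.Icc 0 T, ‖F s (x - (t - s))‖ₑ)
    (hV : ∀ t ∈ Set.Icc 0 T, ∀ x,
      V t x ≤ ‖g (x + t)‖ₑ + ∫⁻ s in Set.Icc 0 T, ‖G s (x + (t - s))‖ₑ) :
    (∫⁻ t in Set.Icc 0 T, ∫⁻ x, (U t x * V t x) ^ 2) ^ (1 / 2 : ℝ)
      ≤ (eLpNorm f 2 + ∫⁻ t in Set.Icc 0 T, eLpNorm (F t) 2)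
        * (eLpNorm g 2 + ∫⁻ t in Set.Icc 0 T, eLpNorm (G t) 2) := by
  let H : ℝ → ℝ → ℝ≥0∞ := fun s y => ‖F s (y + s)‖ₑ
  let K : ℝ → ℝ → ℝ≥0∞ := fun s y => ‖G s (y - s)‖ₑ
  let M : ℝ → ℝ≥0∞ := fun y => ‖f y‖ₑ + ∫⁻ s in Set.Icc 0 T, H s y
  let N : ℝ → ℝ≥0∞ := fun y => ‖g y‖ₑ + ∫⁻ s in Set.Icc 0 T, K s y
  have hH : Measurable (Function.uncurry H) :=
    (hF.comp (measurable_fst.prodMk (measurable_snd.add measurable_fst))).enorm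
  have hK : Measurable (Function.uncurry K) :=
    (hG.comp (measurable_fst.prodMk (measurable_snd.sub measurable_fst))).enorm
  have hHs : ∀ s, eLpNorm (H s) 2 = eLpNorm (F s) 2 := fun s => by
    rw [eLpNorm_enorm]
    exact eLpNorm_comp_measurePreserving
      (hF.comp measurable_prodMk_left).aestronglyMeasurable (measurePreserving_add_right _ s)
  have hKs : ∀ s, eLpNorm (K s) 2 = eLpNorm (G s) 2 := fun s => by
    rw [eLpNorm_enorm]
    exact eLpNorm_comp_measurePreserving
      (hG.comp measurable_prodMk_left).aestronglyMeasurable (measurePreserving_sub_right _ s)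
  calc (∫⁻ t in Set.Icc 0 T, ∫⁻ x, (U t x * V t x) ^ 2) ^ (1 / 2 : ℝ)
      ≤ (∫⁻ t in Set.Icc 0 T, ∫⁻ x, (M (x - t) * N (x + t)) ^ 2) ^ (1 / 2 : ℝ) := by
        refine rpow_le_rpow (setLIntegral_mono' measurableSet_Icc fun t ht => ?_) (by norm_num)
        refine lintegral_mono fun x => pow_le_pow_left' (mul_le_mul' ?_ ?_) 2
        · simpa only [M, H, sub_add] using hU t ht x
        · simpa only [N, K, add_sub_assoc] using hV t ht x
    _ = eLpNorm (fun z : ℝ × ℝ => M (z.2 - z.1) * N (z.2 + z.1)) 2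
          ((volume.restrict (Set.Icc 0 T)).prod volume) := by
        rw [eLpNorm_two_eq_lintegral_sq, lintegral_prod _ (by fun_prop)]
        rfl
    _ ≤ eLpNorm (fun z : ℝ × ℝ => M (z.2 - z.1) * N (z.2 + z.1)) 2 :=
        eLpNorm_mono_measure _ (Measure.prod_mono Measure.restrict_le_self le_rfl)
    _ ≤ (eLpNorm (‖f ·‖ₑ) 2 + ∫⁻ s in Set.Icc 0 T, eLpNorm (H s) 2)
        * (eLpNorm (‖g ·‖ₑ) 2 + ∫⁻ s in Set.Icc 0 T, eLpNorm (K s) 2) := by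
        -- elaborated before meeting the goal, where unifying with `M`, `N` is expensive
        have hwave := eLpNorm_two_wave_mul_wave_le (ν := volume.restrict (Set.Icc 0 T))
          (ν' := volume.restrict (Set.Icc 0 T)) hf.enorm hg.enorm hH hK
        exact hwave
    _ = _ := by simp only [eLpNorm_enorm, hHs, hKs]

/-- Bilinear space-time `L²` estimate for Duhamel solutions
`u(t) = e^{-itD_x}f + i∫₀ᵗ e^{-i(t-s)D_x} F(s) ds` (i.e. `u(t,x) = f(x-t) + i∫₀ᵗ F(s, x-(t-s)) ds`)
and `v(t) = e^{itD_x}g + i∫₀ᵗ e^{i(t-s)D_x} G(s) ds` of `(D_t + D_x)u = F, u(0) = f` and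
`(D_t - D_x)v = G, v(0) = g`:
`‖uv‖_{L²([0,T]×ℝ)} ≤ C (‖f‖_{L²} + ∫₀ᵀ ‖F(t)‖_{L²} dt)(‖g‖_{L²} + ∫₀ᵀ ‖G(t)‖_{L²} dt)`,
with an absolute constant `C`; the same holds with `u` replaced by its complex conjugate. -/
theorem null_form_estimate_duhamel :
    ∃ C : ℝ≥0∞, 0 < C ∧ C < ⊤ ∧ ∀ (T : ℝ), 0 < T → ∀ (f g : ℝ → ℂ) (F G : ℝ → ℝ → ℂ),
      Measurable f → Measurable g →
      Measurable (fun p : ℝ × ℝ => F p.1 p.2) → Measurable (fun p : ℝ × ℝ => G p.1 p.2) →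
      ∀ u v : ℝ → ℝ → ℂ,
      (∀ t x, u t x = f (x - t) + Complex.I * ∫ s in (0:ℝ)..t, F s (x - (t - s))) →
      (∀ t x, v t x = g (x + t) + Complex.I * ∫ s in (0:ℝ)..t, G s (x + (t - s))) →
      (∫⁻ t in Set.Icc (0:ℝ) T, ∫⁻ x : ℝ,
          (‖u t x * v t x‖₊ : ℝ≥0∞) ^ 2) ^ (1/2 : ℝ) ≤
        C * ((∫⁻ x : ℝ, (‖f x‖₊ : ℝ≥0∞) ^ 2) ^ (1/2 : ℝ)
              + ∫⁻ t in Set.Icc (0:ℝ) T, (∫⁻ x : ℝ, (‖F t x‖₊ : ℝ≥0∞) ^ 2) ^ (1/2 : ℝ))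
          * ((∫⁻ x : ℝ, (‖g x‖₊ : ℝ≥0∞) ^ 2) ^ (1/2 : ℝ)
              + ∫⁻ t in Set.Icc (0:ℝ) T, (∫⁻ x : ℝ, (‖G t x‖₊ : ℝ≥0∞) ^ 2) ^ (1/2 : ℝ)) ∧
      (∫⁻ t in Set.Icc (0:ℝ) T, ∫⁻ x : ℝ,
          (‖(starRingEnd ℂ) (u t x) * v t x‖₊ : ℝ≥0∞) ^ 2) ^ (1/2 : ℝ) ≤
        C * ((∫⁻ x : ℝ, (‖f x‖₊ : ℝ≥0∞) ^ 2) ^ (1/2 : ℝ)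
              + ∫⁻ t in Set.Icc (0:ℝ) T, (∫⁻ x : ℝ, (‖F t x‖₊ : ℝ≥0∞) ^ 2) ^ (1/2 : ℝ))
          * ((∫⁻ x : ℝ, (‖g x‖₊ : ℝ≥0∞) ^ 2) ^ (1/2 : ℝ)
              + ∫⁻ t in Set.Icc (0:ℝ) T, (∫⁻ x : ℝ, (‖G t x‖₊ : ℝ≥0∞) ^ 2) ^ (1/2 : ℝ)) := by
  refine ⟨1, one_pos, one_lt_top, fun T _ f g F G hf hg hF hG u v hu hv => ?_⟩
  have hu' : ∀ t ∈ Set.Icc 0 T, ∀ x,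
      ‖u t x‖ₑ ≤ ‖f (x - t)‖ₑ + ∫⁻ s in Set.Icc 0 T, ‖F s (x - (t - s))‖ₑ :=
    fun t ht x => hu t x ▸ enorm_add_I_mul_intervalIntegral_le ht _ _
  have hv' : ∀ t ∈ Set.Icc 0 T, ∀ x,
      ‖v t x‖ₑ ≤ ‖g (x + t)‖ₑ + ∫⁻ s in Set.Icc 0 T, ‖G s (x + (t - s))‖ₑ :=
    fun t ht x => hv t x ▸ enorm_add_I_mul_intervalIntegral_le ht _ _
  have hbound := fun U hU => bilinear_estimate_of_duhamel_bounds (U := U) hf hg hF hG hU hv'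
  simp only [eLpNorm_two_eq_lintegral_sq] at hbound
  simp only [one_mul, ← enorm_eq_nnnorm, enorm_mul, RCLike.enorm_conj]
  exact ⟨hbound _ hu', hbound _ hu'⟩
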